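/- arXiv:0810.5595 — 5 statements merged into one kernel-verified Lean document; each statement's English description precedes it below -/
import Mathlib

section
/- Given nonzero integers a and b, there exists an infinite set S of prime numbers such that: every p ∈ S satisfies p ≡ 1 (mod 4), p does not divide a·b, and a + b·p² ≠ 0; and for all p, q ∈ S with p ≠ q, the rational number (a + b·p²)/(a + b·q²) is not the square of any rational number. -/
/-!
Write `N(p) = a + b p²`. Given a bound `M`, take `t = (max M 2)!` and a prime `ℓ ∣ 1 + a b t²`;
then `ℓ > M` is odd, `ℓ ∤ ab`, and `ℓ ∣ a (1 + a b t²) = N(a t)`. Replacing `a t` by `a t + ℓ` if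
necessary gives `r` with `ℓ ∥ N(r)`, and Dirichlet's theorem gives a prime `p ≡ 1 (mod 4)`,
`p ≡ r (mod ℓ²)`, `p > M`, so that `ℓ ∥ N(p)`. Choosing `M` larger than `|N(q)|` for the primes `q`
already chosen, `ℓ ∤ N(q)`, so `N(p)/N(q)` has odd `ℓ`-adic valuation and is not a square.
-/

lemma padicValInt_eq_one_of_dvd_of_not_sq_dvd {ℓ : ℕ} [Fact ℓ.Prime] {m : ℤ}
    (h : (ℓ : ℤ) ∣ m) (h2 : ¬ (ℓ : ℤ) ^ 2 ∣ m) : padicValInt ℓ m = 1 := by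
  have hm : m ≠ 0 := by rintro rfl; exact h2 (dvd_zero _)
  have hle : 1 ≤ padicValInt ℓ m :=
    ((padicValInt_dvd_iff 1 m).mp (by simpa using h)).resolve_left hm
  have hlt : ¬ 2 ≤ padicValInt ℓ m := fun h' => h2 ((padicValInt_dvd_iff 2 m).mpr (Or.inr h'))
  omega

lemma not_exists_sq_of_odd_padicValRat {ℓ : ℕ} [Fact ℓ.Prime] {x : ℚ}
    (hx : Odd (padicValRat ℓ x)) : ¬ ∃ w : ℚ, x = w ^ 2 := by
  rintro ⟨w, rfl⟩
  rw [padicValRat.pow] at hx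
  exact Int.not_even_iff_odd.mpr hx ⟨padicValRat ℓ w, by push_cast; ring⟩

lemma padicValRat_div_eq_one {ℓ : ℕ} [Fact ℓ.Prime] {m n : ℤ}
    (hm : (ℓ : ℤ) ∣ m) (hm2 : ¬ (ℓ : ℤ) ^ 2 ∣ m) (hn : ¬ (ℓ : ℤ) ∣ n) :
    padicValRat ℓ (m / n) = 1 := by
  have hm0 : (m : ℚ) ≠ 0 := by rintro h; exact hm2 (by simp_all)
  have hn0 : (n : ℚ) ≠ 0 := by rintro h; exact hn (by simp_all)
  rw [padicValRat.div hm0 hn0, padicValRat.of_int, padicValRat.of_int,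
    padicValInt_eq_one_of_dvd_of_not_sq_dvd hm hm2, padicValInt.eq_zero_of_not_dvd hn]
  rfl

lemma not_exists_sq_div_of_exact_dvd {ℓ : ℕ} [Fact ℓ.Prime] {m n : ℤ}
    (hm : (ℓ : ℤ) ∣ m) (hm2 : ¬ (ℓ : ℤ) ^ 2 ∣ m) (hn : ¬ (ℓ : ℤ) ∣ n) :
    (¬ ∃ w : ℚ, (m / n : ℚ) = w ^ 2) ∧ ¬ ∃ w : ℚ, (n / m : ℚ) = w ^ 2 := by
  have hval := padicValRat_div_eq_one hm hm2 hn
  refine ⟨not_exists_sq_of_odd_padicValRat (ℓ := ℓ) (by rw [hval]; decide),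
    not_exists_sq_of_odd_padicValRat (ℓ := ℓ) ?_⟩
  rw [← inv_div, padicValRat.inv, hval]
  decide

lemma exists_prime_dvd_one_add_mul_sq {c : ℤ} (hc : c ≠ 0) {t : ℕ} (ht : 2 ≤ t) :
    ∃ ℓ : ℕ, ℓ.Prime ∧ (ℓ : ℤ) ∣ 1 + c * t ^ 2 := by
  have hct : 4 ≤ |c * t ^ 2| := by
    rw [abs_mul, abs_pow, Nat.abs_cast]
    have : (4 : ℤ) ≤ (t : ℤ) ^ 2 := by nlinarith
    nlinarith [Int.one_le_abs hc]
  have hne : (1 + c * t ^ 2).natAbs ≠ 1 := by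
    generalize c * t ^ 2 = x at hct
    rw [Int.abs_eq_natAbs] at hct
    omega
  obtain ⟨ℓ, hℓ, hdvd⟩ := Nat.exists_prime_and_dvd hne
  exact ⟨ℓ, hℓ, Int.natCast_dvd.mpr hdvd⟩

lemma Prime.not_dvd_of_dvd_one_add_mul {R : Type*} [CommRing R] {p x y : R} (hp : Prime p)
    (h : p ∣ 1 + x * y) : ¬ p ∣ x := fun hx =>
  hp.not_dvd_one ((dvd_add_left (dvd_mul_of_dvd_left hx y)).mp h)

lemma exists_prime_gt_dvd_add_mul_sq {a b : ℤ} (hab : a * b ≠ 0) (M : ℕ) :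
    ∃ ℓ : ℕ, ℓ.Prime ∧ M < ℓ ∧ ℓ ≠ 2 ∧ ¬ (ℓ : ℤ) ∣ a * b ∧ ∃ r : ℤ, (ℓ : ℤ) ∣ a + b * r ^ 2 := by
  obtain ⟨ℓ, hℓ, hdvd⟩ := exists_prime_dvd_one_add_mul_sq hab
    ((Nat.le_max_right M 2).trans (Nat.self_le_factorial _))
  set t := (max M 2).factorial
  have hℓZ : Prime (ℓ : ℤ) := Nat.prime_iff_prime_int.mp hℓ
  have hℓt : ¬ ℓ ∣ t := fun h => hℓZ.not_dvd_of_dvd_one_add_mul (by rwa [mul_comm] at hdvd)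
    (dvd_pow (Int.natCast_dvd_natCast.mpr h) two_ne_zero)
  rw [hℓ.dvd_factorial, not_le, max_lt_iff] at hℓt
  refine ⟨ℓ, hℓ, hℓt.1, hℓt.2.ne', hℓZ.not_dvd_of_dvd_one_add_mul hdvd, a * t, ?_⟩
  have hfactor : a + b * (a * t) ^ 2 = a * (1 + a * b * t ^ 2) := by ring
  exact hfactor ▸ dvd_mul_of_dvd_right hdvd a

lemma exists_dvd_and_not_sq_dvd_add_mul_sq {ℓ : ℕ} (hℓ : ℓ.Prime) (hℓ2 : ℓ ≠ 2) {a b r₀ : ℤ}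
    (hab : ¬ (ℓ : ℤ) ∣ a * b) (hr₀ : (ℓ : ℤ) ∣ a + b * r₀ ^ 2) :
    ∃ r : ℤ, (ℓ : ℤ) ∣ a + b * r ^ 2 ∧ ¬ (ℓ : ℤ) ^ 2 ∣ a + b * r ^ 2 := by
  by_cases h : (ℓ : ℤ) ^ 2 ∣ a + b * r₀ ^ 2
  swap
  · exact ⟨r₀, hr₀, h⟩
  have hℓZ : Prime (ℓ : ℤ) := Nat.prime_iff_prime_int.mp hℓ
  have hshift : a + b * (r₀ + ℓ) ^ 2 = (a + b * r₀ ^ 2) + ℓ * (b * (2 * r₀ + ℓ)) := by ring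
  refine ⟨r₀ + ℓ, hshift ▸ dvd_add hr₀ (dvd_mul_right _ _), ?_⟩
  rw [hshift, dvd_add_right h, sq, mul_dvd_mul_iff_left (by exact_mod_cast hℓ.ne_zero)]
  intro hd
  rcases hℓZ.dvd_mul.mp hd with hb | hd
  · exact hab (dvd_mul_of_dvd_right hb a)
  rcases hℓZ.dvd_mul.mp ((dvd_add_left (dvd_refl _)).mp hd) with h2 | hr
  · exact hℓ2 ((Nat.prime_dvd_prime_iff_eq hℓ Nat.prime_two).mp (by exact_mod_cast h2))
  · have ha : (ℓ : ℤ) ∣ a := (dvd_add_left (dvd_mul_of_dvd_right (dvd_pow hr two_ne_zero) b)).mp hr₀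
    exact hab (dvd_mul_of_dvd_left ha b)

lemma Nat.exists_prime_gt_and_eq_mod_of_coprime {m n : ℕ} [NeZero m] [NeZero n] (hmn : m.Coprime n)
    {u : ZMod m} {v : ZMod n} (hu : IsUnit u) (hv : IsUnit v) (M : ℕ) :
    ∃ p > M, p.Prime ∧ (p : ZMod m) = u ∧ (p : ZMod n) = v := by
  let e := ZMod.chineseRemainder hmn
  have : NeZero (m * n) := ⟨mul_ne_zero (NeZero.ne m) (NeZero.ne n)⟩
  obtain ⟨p, hpM, hp, hpuv⟩ := Nat.forall_exists_prime_gt_and_eq_mod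
    ((Prod.isUnit_iff.mpr (show IsUnit (u, v).1 ∧ IsUnit (u, v).2 from ⟨hu, hv⟩)).map e.symm) M
  have hcast := congrArg e hpuv
  rw [map_natCast, RingEquiv.apply_symm_apply, Prod.ext_iff] at hcast
  exact ⟨p, hpM, hp, hcast⟩

lemma exists_prime_gt_mod_four_eq_one_exact_dvd {a b : ℤ} (hab : a * b ≠ 0) (M : ℕ) :
    ∃ p ℓ : ℕ, M < p ∧ p.Prime ∧ p % 4 = 1 ∧ M < ℓ ∧ ℓ.Prime ∧
      (ℓ : ℤ) ∣ a + b * p ^ 2 ∧ ¬ (ℓ : ℤ) ^ 2 ∣ a + b * p ^ 2 := by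
  obtain ⟨ℓ, hℓ, hℓM, hℓ2, hℓab, r₀, hr₀⟩ := exists_prime_gt_dvd_add_mul_sq hab M
  obtain ⟨r, hr, hr2⟩ := exists_dvd_and_not_sq_dvd_add_mul_sq hℓ hℓ2 hℓab hr₀
  have hℓZ : Prime (ℓ : ℤ) := Nat.prime_iff_prime_int.mp hℓ
  have hℓr : ¬ (ℓ : ℤ) ∣ r := fun h =>
    hℓab (dvd_mul_of_dvd_left
      ((dvd_add_left (dvd_mul_of_dvd_right (dvd_pow h two_ne_zero) b)).mp hr) b)
  have hcop : Nat.Coprime (2 ^ 2) (ℓ ^ 2) :=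
    Nat.Coprime.pow 2 2 ((Nat.coprime_primes Nat.prime_two hℓ).mpr (Ne.symm hℓ2))
  have : NeZero (ℓ ^ 2) := ⟨pow_ne_zero 2 hℓ.ne_zero⟩
  have hrunit : IsUnit (r : ZMod (ℓ ^ 2)) := by
    rw [ZMod.coe_int_isUnit_iff_isCoprime, Nat.cast_pow]
    exact (hℓZ.coprime_iff_not_dvd.mpr hℓr).pow_left
  obtain ⟨p, hpM, hp, hp4, hpr⟩ :=
    Nat.exists_prime_gt_and_eq_mod_of_coprime hcop isUnit_one hrunit M
  have hpr : a + b * (p : ℤ) ^ 2 ≡ a + b * r ^ 2 [ZMOD (ℓ : ℤ) ^ 2] := by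
    have := (ZMod.intCast_eq_intCast_iff (p : ℤ) r (ℓ ^ 2)).mp (by simpa using hpr)
    push_cast at this
    exact (this.pow 2).mul_left b |>.add_left a
  refine ⟨p, ℓ, hpM, hp, ?_, hℓM, hℓ, ?_, hpr.dvd_iff.not.mpr hr2⟩
  · simpa using (ZMod.natCast_eq_natCast_iff' p 1 4).mp (by simpa using hp4)
  · exact ((hpr.of_dvd (dvd_pow_self _ two_ne_zero)).dvd_iff).mpr hr

lemma Int.not_natCast_dvd_of_natAbs_lt {ℓ : ℕ} {n : ℤ} (hn : n ≠ 0) (h : n.natAbs < ℓ) :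
    ¬ (ℓ : ℤ) ∣ n :=
  fun hd => (Nat.le_of_dvd (Int.natAbs_pos.mpr hn) (Int.natCast_dvd.mp hd)).not_gt h

lemma exists_prime_exact_dvd_not_dvd_of_finset {a b : ℤ} (hab : a * b ≠ 0) (s : Finset ℕ)
    (hs : ∀ q ∈ s, a + b * (q : ℤ) ^ 2 ≠ 0) :
    ∃ p ℓ : ℕ, p.Prime ∧ p % 4 = 1 ∧ ¬ (p : ℤ) ∣ a * b ∧ ℓ.Prime ∧
      (ℓ : ℤ) ∣ a + b * p ^ 2 ∧ ¬ (ℓ : ℤ) ^ 2 ∣ a + b * p ^ 2 ∧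
      ∀ q ∈ s, q < p ∧ ¬ (ℓ : ℤ) ∣ a + b * q ^ 2 := by
  let M := (a * b).natAbs + ∑ q ∈ s, (q + (a + b * (q : ℤ) ^ 2).natAbs)
  obtain ⟨p, ℓ, hpM, hp, hp4, hℓM, hℓ, hℓN, hℓN2⟩ :=
    exists_prime_gt_mod_four_eq_one_exact_dvd hab M
  refine ⟨p, ℓ, hp, hp4, Int.not_natCast_dvd_of_natAbs_lt hab (by omega), hℓ, hℓN, hℓN2,
    fun q hq => ?_⟩
  have hqM : q + (a + b * (q : ℤ) ^ 2).natAbs ≤ M :=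
    (Finset.single_le_sum (f := fun q : ℕ => q + (a + b * (q : ℤ) ^ 2).natAbs)
      (fun _ _ => Nat.zero_le _) hq).trans (Nat.le_add_left _ _)
  exact ⟨by omega, Int.not_natCast_dvd_of_natAbs_lt (hs q hq) (by omega)⟩

/-- **Theorem (constructive infinite set of primes).**
Given nonzero integers `a` and `b`, there is an infinite set `S` of prime numbers such
that every `p ∈ S` satisfies `p ≡ 1 (mod 4)`, `p ∤ a·b` and `a + b·p² ≠ 0`, and for all
distinct `p, q ∈ S` the rational number `(a + b·p²)/(a + b·q²)` is not a square in `ℚ`. -/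
theorem infinite_prime_set_nonsquare_ratios (a b : ℤ) (ha : a ≠ 0) (hb : b ≠ 0) :
    ∃ S : Set ℕ, S.Infinite ∧
      (∀ p ∈ S, Nat.Prime p ∧ p % 4 = 1 ∧ ¬ ((p : ℤ) ∣ a * b) ∧ a + b * (p : ℤ) ^ 2 ≠ 0) ∧
      (∀ p ∈ S, ∀ q ∈ S, p ≠ q →
        ¬ ∃ w : ℚ, ((a : ℚ) + (b : ℚ) * (p : ℚ) ^ 2) / ((a : ℚ) + (b : ℚ) * (q : ℚ) ^ 2)
          = w ^ 2) := by
  let N : ℕ → ℤ := fun p => a + b * (p : ℤ) ^ 2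
  let Good : ℕ → Prop := fun p => p.Prime ∧ p % 4 = 1 ∧ ¬ (p : ℤ) ∣ a * b ∧ N p ≠ 0
  let Separated : ℕ → ℕ → Prop := fun q p =>
    q < p ∧ ∃ ℓ : ℕ, ℓ.Prime ∧ (ℓ : ℤ) ∣ N p ∧ ¬ (ℓ : ℤ) ^ 2 ∣ N p ∧ ¬ (ℓ : ℤ) ∣ N q
  obtain ⟨f, hgood, hsep⟩ := exists_seq_of_forall_finset_exists Good Separated fun s hs => by
    obtain ⟨p, ℓ, hp, hp4, hpab, hℓ, hℓN, hℓN2, hsp⟩ :=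
      exists_prime_exact_dvd_not_dvd_of_finset (mul_ne_zero ha hb) s fun q hq => (hs q hq).2.2.2
    have hNp : N p ≠ 0 := fun h => hℓN2 (by simp only [N] at h; rw [h]; exact dvd_zero _)
    exact ⟨p, ⟨hp, hp4, hpab, hNp⟩, fun q hq => ⟨(hsp q hq).1, ℓ, hℓ, hℓN, hℓN2, (hsp q hq).2⟩⟩
  have hmono : StrictMono f := fun m n hmn => (hsep m n hmn).1
  refine ⟨Set.range f, Set.infinite_range_of_injective hmono.injective,
    by rintro _ ⟨n, rfl⟩; exact hgood n, ?_⟩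
  rintro _ ⟨i, rfl⟩ _ ⟨j, rfl⟩ hij
  have hcast : ∀ p : ℕ, (a : ℚ) + b * (p : ℚ) ^ 2 = (N p : ℚ) := fun p => by simp [N]
  rw [hcast, hcast]
  rcases lt_or_gt_of_ne (hmono.injective.ne_iff.mp hij) with hlt | hlt
  · obtain ⟨-, ℓ, hℓ, hℓN, hℓN2, hℓN'⟩ := hsep i j hlt
    have := Fact.mk hℓ
    exact (not_exists_sq_div_of_exact_dvd hℓN hℓN2 hℓN').2
  · obtain ⟨-, ℓ, hℓ, hℓN, hℓN2, hℓN'⟩ := hsep j i hlt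
    have := Fact.mk hℓ
    exact (not_exists_sq_div_of_exact_dvd hℓN hℓN2 hℓN').1
end

section
/- Let A be an integral domain that is a finitely generated ℤ-algebra, let x ∈ A be nonzero, and let p be a prime number such that x does not belong to the radical of the ideal pA. Then there exists a maximal ideal m of A such that p ∈ m and x ∉ m; moreover the residue field A/m is a finite field of characteristic p. -/
/-!
Since `ℤ` is a Jacobson ring, so is every finitely generated `ℤ`-algebra `A`: the radical of
`pA` is the intersection of the maximal ideals containing `p`, so one of them, `m`, misses `x`.
The residue field `A ⧸ m` has characteristic `p` and is finitely generated over `𝔽_p`, hence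
finite by Zariski's lemma.
-/

theorem isJacobsonRing_of_jacobson_bot_eq_bot {R : Type*} [CommRing R] [Ring.DimensionLEOne R]
    (h : (⊥ : Ideal R).jacobson = ⊥) : IsJacobsonRing R := by
  refine isJacobsonRing_iff_prime_eq.mpr fun {P} hP => ?_
  rcases eq_or_ne P ⊥ with rfl | hP0
  · exact h
  · have := Ring.DimensionLEOne.maximalOfPrime hP0 hP
    exact P.jacobson_eq_self_of_isMaximal

theorem Int.jacobson_bot_eq_bot : (⊥ : Ideal ℤ).jacobson = ⊥ := by
  refine le_bot_iff.mp fun n hn => ?_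
  have hunit : n * n + 1 = 1 ∨ n * n + 1 = -1 :=
    Int.isUnit_iff.mp (Ideal.mem_jacobson_bot.mp hn n)
  have hsq : n * n = 0 := by rcases hunit with h | h <;> nlinarith [mul_self_nonneg n]
  exact Ideal.mem_bot.mpr (mul_self_eq_zero.mp hsq)

instance Int.isJacobsonRing : IsJacobsonRing ℤ :=
  isJacobsonRing_of_jacobson_bot_eq_bot Int.jacobson_bot_eq_bot

theorem Ideal.exists_isMaximal_le_notMem_of_notMem_radical {R : Type*} [CommRing R]
    [IsJacobsonRing R] {I : Ideal R} {x : R} (hx : x ∉ I.radical) :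
    ∃ m : Ideal R, m.IsMaximal ∧ I ≤ m ∧ x ∉ m := by
  rw [Ideal.radical_eq_jacobson, Ideal.jacobson, Ideal.mem_sInf] at hx
  push Not at hx
  obtain ⟨m, ⟨hIm, hm⟩, hxm⟩ := hx
  exact ⟨m, hm, hIm, hxm⟩

theorem Ideal.charP_quotient_of_natCast_mem {R : Type*} [CommRing R] {I : Ideal R} (hI : I ≠ ⊤)
    {p : ℕ} (hp : p.Prime) (hpI : (p : R) ∈ I) : CharP (R ⧸ I) p := by
  have : Nontrivial (R ⧸ I) := Ideal.Quotient.nontrivial_iff.mpr hI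
  refine (CharP.charP_iff_prime_eq_zero hp).mpr ?_
  rw [← map_natCast (Ideal.Quotient.mk I)]
  exact Ideal.Quotient.eq_zero_iff_mem.mpr hpI

theorem finite_of_charP_of_finiteType_int (K : Type*) [Field K] [Algebra.FiniteType ℤ K]
    (p : ℕ) [NeZero p] [CharP K p] : Finite K := by
  let : Algebra (ZMod p) K := ZMod.algebra K p
  have : Algebra.FiniteType (ZMod p) K :=
    Algebra.FiniteType.of_restrictScalars_finiteType ℤ (ZMod p) K
  have : Module.Finite (ZMod p) K := finite_of_finite_type_of_isJacobsonRing (ZMod p) K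
  exact Module.finite_of_finite (ZMod p)

theorem exists_maximal_ideal_containing_prime_avoiding_general
    {A : Type*} [CommRing A] [Algebra.FiniteType ℤ A]
    (x : A) (p : ℕ) (hp : p.Prime)
    (hrad : x ∉ (Ideal.span {(p : A)}).radical) :
    ∃ m : Ideal A, m.IsMaximal ∧ (p : A) ∈ m ∧ x ∉ m ∧
      Finite (A ⧸ m) ∧ CharP (A ⧸ m) p := by
  have : IsJacobsonRing A := isJacobsonRing_of_finiteType (A := ℤ)
  obtain ⟨m, hm, hpIm, hxm⟩ := Ideal.exists_isMaximal_le_notMem_of_notMem_radical hrad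
  have hpm : (p : A) ∈ m := hpIm (Ideal.mem_span_singleton_self _)
  have hchar : CharP (A ⧸ m) p := Ideal.charP_quotient_of_natCast_mem hm.ne_top hp hpm
  let : Field (A ⧸ m) := Ideal.Quotient.field m
  have : NeZero p := ⟨hp.ne_zero⟩
  have hfg : Algebra.FiniteType ℤ (A ⧸ m) :=
    .of_surjective (Ideal.Quotient.mkₐ ℤ m) (Ideal.Quotient.mkₐ_surjective ℤ m)
  -- `hfg` uses the quotient's `ℤ`-algebra structure, which instance search does not match
  -- with the one induced by the `Field` instance.
  exact ⟨m, hm, hpm, hxm, @finite_of_charP_of_finiteType_int (A ⧸ m) _ hfg p _ hchar, hchar⟩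

/-- **Lemma.** Let `A` be an integral domain that is a finitely generated `ℤ`-algebra,
let `x ∈ A` be nonzero and let `p` be a prime number with `x ∉ √(pA)`. Then there is a
maximal ideal `m` of `A` with `p ∈ m` and `x ∉ m`; moreover the residue field `A/m` is
a finite field of characteristic `p`. -/
theorem exists_maximal_ideal_containing_prime_avoiding
    {A : Type*} [CommRing A] [IsDomain A] [Algebra.FiniteType ℤ A]
    (x : A) (hx : x ≠ 0) (p : ℕ) (hp : p.Prime)
    (hrad : x ∉ (Ideal.span {(p : A)}).radical) :
    ∃ m : Ideal A, m.IsMaximal ∧ (p : A) ∈ m ∧ x ∉ m ∧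
      Finite (A ⧸ m) ∧ CharP (A ⧸ m) p :=
  exists_maximal_ideal_containing_prime_avoiding_general x p hp hrad
end

section
/- Let F be a finite field of characteristic p, where p is a prime with p ≡ 1 (mod 4), and let e ∈ F with e ≠ 0. Then there exists n ∈ F such that 1 + e·n² is not a square in F. -/
/-!
If `1 + e n²` were a square for every `n`, then `s ↦ 1 + e s` would map the finite set of squares
injectively into itself, hence onto it, and `0 = 1 + e n²` for some `n`. As `-1` is a square when
`p ≡ 1 (mod 4)`, so is `e = -1 / n²`; rescaling `n` then makes `1 + t²` a square for every `t`, so every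
sum of two squares is a square. But in a finite field every element is a sum of two squares, while
in odd characteristic not every element is a square.
-/

open Polynomial

theorem isSquare_neg_one_of_charP {R : Type*} [Ring R] (p : ℕ) [Fact p.Prime] [CharP R p]
    (hp : p % 4 ≠ 3) : IsSquare (-1 : R) := by
  simpa using (ZMod.exists_sq_eq_neg_one_iff.mpr hp).map (ZMod.castHom (dvd_refl p) R)

namespace FiniteField

variable {F : Type*} [Field F] [Finite F]

theorem exists_sq_add_sq (x : F) : ∃ a b : F, a ^ 2 + b ^ 2 = x := by
  have := Fintype.ofFinite F
  by_cases hF : ringChar F = 2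
  · obtain ⟨b, hb⟩ := (isSquare_iff_exists_sq x).mp (isSquare_of_char_two hF x)
    exact ⟨0, b, by simp [hb]⟩
  · obtain ⟨a, b, hab⟩ := exists_root_sum_quadratic (f := X ^ 2) (g := X ^ 2 - C x)
      (degree_X_pow 2) (degree_X_pow_sub_C two_pos x) (odd_card_of_char_ne_two hF)
    refine ⟨a, b, ?_⟩
    simp only [eval_pow, eval_X, eval_sub, eval_C] at hab
    linear_combination hab

theorem exists_one_add_mul_sq_eq_zero {e : F} (he : e ≠ 0)
    (h : ∀ n, IsSquare (1 + e * n ^ 2)) : ∃ n, 1 + e * n ^ 2 = 0 := by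
  let f : {s : F // IsSquare s} → {s : F // IsSquare s} := fun s =>
    ⟨1 + e * s, by obtain ⟨n, hn⟩ := (isSquare_iff_exists_sq _).mp s.2; exact hn ▸ h n⟩
  have hf : Function.Injective f := fun s t hst =>
    Subtype.ext (mul_left_cancel₀ he (add_left_cancel (congrArg Subtype.val hst)))
  obtain ⟨s, hs⟩ := Finite.injective_iff_surjective.mp hf ⟨0, .zero⟩
  obtain ⟨n, hn⟩ := (isSquare_iff_exists_sq _).mp s.2
  exact ⟨n, hn ▸ congrArg Subtype.val hs⟩

theorem exists_not_isSquare_one_add_mul_sq (hF : ringChar F ≠ 2) {e : F} (he : e ≠ 0)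
    (he_sq : IsSquare e) : ∃ n, ¬IsSquare (1 + e * n ^ 2) := by
  by_contra! h
  obtain ⟨c, rfl⟩ := (isSquare_iff_exists_sq e).mp he_sq
  have hc : c ≠ 0 := by rintro rfl; simp at he
  obtain ⟨u, hu⟩ := exists_nonsquare hF
  obtain ⟨a, b, rfl⟩ := exists_sq_add_sq u
  apply hu
  rcases eq_or_ne a 0 with rfl | ha
  · exact ⟨b, by ring⟩
  · have hfactor : a ^ 2 + b ^ 2 = a ^ 2 * (1 + c ^ 2 * (b / (a * c)) ^ 2) := by
      field_simp
    rw [hfactor]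
    exact (IsSquare.sq a).mul (h _)

end FiniteField

/-- **Lemma.** Let `F` be a finite field of characteristic `p`, where `p ≡ 1 (mod 4)`,
and let `e ∈ F`, `e ≠ 0`. Then there is `n ∈ F` such that `1 + e·n²` is not a square
in `F`. -/
theorem exists_one_add_mul_sq_not_square {F : Type*} [Field F] [Finite F]
    (p : ℕ) [CharP F p] (hp : p.Prime) (hp4 : p % 4 = 1) (e : F) (he : e ≠ 0) :
    ∃ n : F, ¬ ∃ w : F, 1 + e * n ^ 2 = w ^ 2 := by
  have : Fact p.Prime := ⟨hp⟩
  simp_rw [← isSquare_iff_exists_sq]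
  by_contra! h
  obtain ⟨n, hn⟩ := FiniteField.exists_one_add_mul_sq_eq_zero he h
  have hn0 : n ≠ 0 := by rintro rfl; simp at hn
  obtain ⟨i, hi⟩ := isSquare_neg_one_of_charP (R := F) p (by omega)
  have he_sq : IsSquare e := ⟨i / n, by field_simp; linear_combination hn + hi⟩
  have hF : ringChar F ≠ 2 := by rw [ringChar.eq F p]; omega
  obtain ⟨m, hm⟩ := FiniteField.exists_not_isSquare_one_add_mul_sq hF he he_sq
  exact hm (h m)
end

section
/- Let K be a field of characteristic zero and let L be a finitely generated field extension of K of transcendence degree 1 over K. Then there exists an irreducible polynomial f ∈ K[X,Y] and a K-algebra isomorphism between L and Frac(K[X,Y]/(f)). In particular L = K(x, y) for some x, y ∈ L with x transcendental over K and y algebraic over K(x). -/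
/-!
Pick `x` transcendental with `L / K(x)` algebraic. Since `L / K` is finitely generated, `L / K(x)`
is finite, and separable in characteristic zero, so a primitive element gives `L = K(x, y)`.
Evaluation `K[X, Y] → L`, `X ↦ x`, `Y ↦ y`, then exhibits `L` as the fraction field of
`K[X, Y] / ker`. As `x` is transcendental, `K[x] ≅ K[X]` is a UFD, and by Gauss's lemma the kernel
of `K[x][Y] → L` is generated by the primitive part of the cleared-denominator minimal polynomial
of `y` over `K(x)`, which is irreducible.
-/

open Polynomial IntermediateField
open scoped nonZeroDivisors

section GaussLemma

variable {R : Type*} [CommRing R] [IsDomain R] [IsGCDMonoid R]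

theorem Polynomial.exists_isPrimitive_map_associated (K : Type*) [Field K] [Algebra R K]
    [IsFractionRing R K] {p : K[X]} (hp : p ≠ 0) :
    ∃ f : R[X], f.IsPrimitive ∧ Associated (f.map (algebraMap R K)) p := by
  let := Classical.arbitrary (NormalizedGCDMonoid R)
  set g := IsLocalization.integerNormalization R⁰ p
  obtain ⟨b, hb, hgb⟩ := IsLocalization.integerNormalization_spec R⁰ p
  have hg : g.content ≠ 0 :=
    content_eq_zero_iff.not.mpr (IsFractionRing.integerNormalization_eq_zero_iff.not.mpr hp)
  have hunit : ∀ r : R, r ≠ 0 → IsUnit (C (algebraMap R K r)) := fun r hr =>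
    isUnit_C.mpr (IsFractionRing.to_map_ne_zero_of_mem_nonZeroDivisors
      (mem_nonZeroDivisors_of_ne_zero hr)).isUnit
  have hsplit : C (algebraMap R K g.content) * g.primPart.map (algebraMap R K)
      = C (algebraMap R K b) * p := by
    rw [← map_C, ← Polynomial.map_mul, ← g.eq_C_content_mul_primPart, hgb,
      ← algebraMap_smul K b p, smul_eq_C_mul]
  refine ⟨g.primPart, g.isPrimitive_primPart, ?_⟩
  rw [← associated_isUnit_mul_left_iff (hunit _ hg), hsplit,
    associated_isUnit_mul_left_iff (hunit b (nonZeroDivisors.ne_zero hb))]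
  exact Associated.refl p

variable {L : Type*} [Field L] [Algebra R L] [FaithfulSMul R L]

attribute [local instance] FractionRing.liftAlgebra in
theorem Polynomial.exists_irreducible_ker_aeval_eq_span {y : L} (hy : IsAlgebraic R y) :
    ∃ f : R[X], Irreducible f ∧ RingHom.ker (aeval y : R[X] →ₐ[R] L) = Ideal.span {f} := by
  have hy' : IsAlgebraic (FractionRing R) y :=
    hy.extendScalars (FaithfulSMul.algebraMap_injective R (FractionRing R))
  obtain ⟨f, hf, hassoc⟩ := exists_isPrimitive_map_associated (R := R) (FractionRing R)
    (minpoly.ne_zero hy'.isIntegral)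
  refine ⟨f, hf.irreducible_iff_irreducible_map_fraction_map.mpr
    (hassoc.symm.irreducible (minpoly.irreducible hy'.isIntegral)), ?_⟩
  ext g
  rw [RingHom.mem_ker, Ideal.mem_span_singleton, ← aeval_map_algebraMap (FractionRing R),
    ← minpoly.dvd_iff, ← hassoc.dvd_iff_dvd_left,
    ← hf.dvd_iff_fraction_map_dvd_fraction_map (FractionRing R)]

end GaussLemma

theorem AlgHom.nonempty_algEquiv_fractionRing_quotient_ker {K L R : Type*} [CommRing K]
    [Field L] [Algebra K L] [CommRing R] [Algebra K R] (ψ : R →ₐ[K] L)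
    (hψ : ∀ z : L, ∃ a b, z = ψ a / ψ b) :
    Nonempty (L ≃ₐ[K] FractionRing (R ⧸ RingHom.ker ψ)) := by
  let : Algebra (R ⧸ RingHom.ker ψ) L := (Ideal.kerLiftAlg ψ).toAlgebra
  have : IsScalarTower K (R ⧸ RingHom.ker ψ) L :=
    .of_algebraMap_eq fun c => ((Ideal.kerLiftAlg ψ).commutes c).symm
  have : FaithfulSMul (R ⧸ RingHom.ker ψ) L :=
    (faithfulSMul_iff_algebraMap_injective _ _).mpr (Ideal.kerLiftAlg_injective ψ)
  have : IsFractionRing (R ⧸ RingHom.ker ψ) L := .of_field _ _ fun z => by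
    obtain ⟨a, b, rfl⟩ := hψ z
    exact ⟨Ideal.Quotient.mk _ a, Ideal.Quotient.mk _ b, rfl⟩
  exact ⟨((FractionRing.algEquiv (R ⧸ RingHom.ker ψ) L).restrictScalars K).symm⟩

section FunctionField

variable {K L : Type*} [Field K] [Field L] [Algebra K L]

theorem IntermediateField.finiteDimensional_of_fg_top (F : IntermediateField K L)
    [Algebra.IsAlgebraic F L] (hfg : (⊤ : IntermediateField K L).FG) : FiniteDimensional F L := by
  obtain ⟨s, hs⟩ := FG.of_restrictScalars (K := K) (E' := (⊤ : IntermediateField F L))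
    (by rwa [restrictScalars_top])
  have := finiteDimensional_adjoin (K := F) (S := (s : Set L))
    fun a _ => (Algebra.IsAlgebraic.isAlgebraic a).isIntegral
  rw [hs] at this
  exact topEquiv.toLinearEquiv.finiteDimensional

theorem IntermediateField.exists_adjoin_pair_eq_top [CharZero K] {x : L}
    [Algebra.IsAlgebraic K⟮x⟯ L] (hfg : (⊤ : IntermediateField K L).FG) :
    ∃ y : L, K⟮x, y⟯ = ⊤ := by
  have := finiteDimensional_of_fg_top K⟮x⟯ hfg
  obtain ⟨y, hy⟩ := Field.exists_primitive_element K⟮x⟯ L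
  refine ⟨y, ?_⟩
  rw [← adjoin_simple_adjoin_simple, hy, restrictScalars_top]

noncomputable def Transcendental.mvPolynomialFinTwoEquiv {x : L} (hx : Transcendental K x) :
    MvPolynomial (Fin 2) K ≃ₐ[K] (Algebra.adjoin K {x})[X] :=
  (MvPolynomial.finSuccEquiv K 1).trans (Polynomial.mapAlgEquiv
    ((MvPolynomial.uniqueAlgEquiv K (Fin 1)).trans (algEquivOfTranscendental K x hx)))

theorem Transcendental.aeval_comp_mvPolynomialFinTwoEquiv {x : L} (hx : Transcendental K x)
    (y : L) :
    ((Polynomial.aeval y).restrictScalars K).comp hx.mvPolynomialFinTwoEquiv.toAlgHom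
      = MvPolynomial.aeval ![y, x] := by
  refine MvPolynomial.algHom_ext (Fin.forall_fin_two.mpr ⟨?_, ?_⟩)
  · simp [mvPolynomialFinTwoEquiv, MvPolynomial.finSuccEquiv_X_zero]
  · have h : MvPolynomial.finSuccEquiv K 1 (.X 1) = C (.X 0) :=
      MvPolynomial.finSuccEquiv_X_succ (j := 0)
    simp [mvPolynomialFinTwoEquiv, h]

open scoped IntermediateField.algebraAdjoinAdjoin in
theorem Transcendental.exists_irreducible_ker_aeval_eq_span {x y : L} (hx : Transcendental K x)
    (hy : IsAlgebraic K⟮x⟯ y) :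
    ∃ f : MvPolynomial (Fin 2) K, Irreducible f ∧
      RingHom.ker (MvPolynomial.aeval ![y, x]) = Ideal.span {f} := by
  have := hx.uniqueFactorizationMonoid_adjoin
  obtain ⟨g, hg, hker⟩ :=
    Polynomial.exists_irreducible_ker_aeval_eq_span (hy.restrictScalars (R := Algebra.adjoin K {x}))
  let e := hx.mvPolynomialFinTwoEquiv
  refine ⟨e.symm g, (MulEquiv.irreducible_iff e.symm.toMulEquiv).mpr hg, ?_⟩
  ext p
  have hp : p ∈ RingHom.ker (MvPolynomial.aeval ![y, x]) ↔
      e p ∈ RingHom.ker (Polynomial.aeval y) := by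
    rw [← hx.aeval_comp_mvPolynomialFinTwoEquiv y]
    rfl
  rw [hp, hker, Ideal.mem_span_singleton, Ideal.mem_span_singleton, ← map_dvd_iff e,
    e.apply_symm_apply]

end FunctionField

/-- **Proposition.** Let `K` be a field of characteristic zero and `L` a finitely
generated field extension of `K` of transcendence degree `1`. Then there is an
irreducible polynomial `f ∈ K[X,Y]` and a `K`-isomorphism `L ≅ Frac(K[X,Y]/(f))`.
In particular `L = K(x, y)` with `x` transcendental over `K` and `y` algebraic over
`K(x)`. -/
theorem fg_transdeg_one_extension_is_function_field_of_plane_curve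
    {K L : Type*} [Field K] [CharZero K] [Field L] [Algebra K L]
    (hfg : ∃ s : Finset L, IntermediateField.adjoin K (s : Set L) = ⊤)
    (htr : ∃ x : L, Transcendental K x ∧
      Algebra.IsAlgebraic (IntermediateField.adjoin K {x}) L) :
    (∃ f : MvPolynomial (Fin 2) K, Irreducible f ∧
      ∃ φ : L ≃+* FractionRing (MvPolynomial (Fin 2) K ⧸ Ideal.span {f}),
        ∀ c : K, φ (algebraMap K L c) =
          algebraMap (MvPolynomial (Fin 2) K ⧸ Ideal.span {f})
            (FractionRing (MvPolynomial (Fin 2) K ⧸ Ideal.span {f}))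
            (Ideal.Quotient.mk (Ideal.span {f}) (MvPolynomial.C c))) ∧
    (∃ x y : L, IntermediateField.adjoin K {x, y} = ⊤ ∧ Transcendental K x ∧
      IsAlgebraic (IntermediateField.adjoin K {x}) y) := by
  obtain ⟨x, hx, halg⟩ := htr
  obtain ⟨y, hxy⟩ := exists_adjoin_pair_eq_top (x := x) hfg
  obtain ⟨f, hf, hker⟩ := hx.exists_irreducible_ker_aeval_eq_span (halg.isAlgebraic y)
  let ψ : MvPolynomial (Fin 2) K →ₐ[K] L := MvPolynomial.aeval ![y, x]
  have hfrac : ∀ z : L, ∃ a b, z = ψ a / ψ b := fun z =>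
    (mem_adjoin_range_iff K ![y, x] z).mp
      (by rw [Matrix.range_cons_cons_empty, Set.pair_comm, hxy]; trivial)
  obtain ⟨φ⟩ := ψ.nonempty_algEquiv_fractionRing_quotient_ker hfrac
  refine ⟨⟨f, hf, ?_⟩, x, y, hxy, hx, halg.isAlgebraic y⟩
  rw [← hker]
  exact ⟨φ.toRingEquiv, fun c =>
    (φ.commutes c).trans (IsScalarTower.algebraMap_apply _ _ _ c)⟩
end

section
/- Let K be a field of characteristic zero, F an algebraic closure of K, and P a prime ideal of F[x₁,…,x_N]. If K is a field of parametrization of P, i.e. there is a field isomorphism ψ : F(P) → F(t) with ψ|_F = id, ψ([x_i]) ∈ K(t) for all i, and ψ⁻¹(t) ∈ K(P), then K(P) is isomorphic to the rational function field K(t) by an isomorphism that is the identity on K, and K is a field of definition of P, i.e. P is generated by its contraction P ∩ K[x₁,…,x_N]. -/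
set_option synthInstance.maxHeartbeats 1000000
set_option maxHeartbeats 1000000

noncomputable section

/-- The coefficient-extension ring homomorphism `K[x₁,…,x_N] → F[x₁,…,x_N]`. -/
def coeffExt (K F : Type*) [Field K] [Field F] [Algebra K F] (N : ℕ) :
    MvPolynomial (Fin N) K →+* MvPolynomial (Fin N) F :=
  MvPolynomial.map (algebraMap K F)

/-- `K` is a field of definition of `P`: `P` is generated by its contraction to
`K[x₁,…,x_N]`. -/
def IsFieldOfDefinition (K : Type*) [Field K] {F : Type*} [Field F] [Algebra K F] {N : ℕ}
    (P : Ideal (MvPolynomial (Fin N) F)) : Prop :=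
  P = Ideal.map (coeffExt K F N) (Ideal.comap (coeffExt K F N) P)

/-- `F(P) = Frac(F[x₁,…,x_N]/P)`, the function field of the variety defined by `P`. -/
abbrev funcField {F : Type*} [Field F] {N : ℕ} (P : Ideal (MvPolynomial (Fin N) F)) :=
  FractionRing (MvPolynomial (Fin N) F ⧸ P)

/-- The canonical embedding of the constants `F` into `F(P)`. -/
def embConst {F : Type*} [Field F] {N : ℕ} (P : Ideal (MvPolynomial (Fin N) F)) :
    F →+* funcField P :=
  (algebraMap (MvPolynomial (Fin N) F ⧸ P) (funcField P)).comp
    ((Ideal.Quotient.mk P).comp MvPolynomial.C)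

/-- The class `[xᵢ]` of the variable `xᵢ` in `F(P)`. -/
def clsX {F : Type*} [Field F] {N : ℕ} (P : Ideal (MvPolynomial (Fin N) F)) (i : Fin N) :
    funcField P :=
  algebraMap (MvPolynomial (Fin N) F ⧸ P) (funcField P) (Ideal.Quotient.mk P (MvPolynomial.X i))

/-- The subfield `L(t)` of `F(t)` generated by an intermediate field `K ⊆ L ⊆ F`
and the variable `t`. -/
def ratSubfield {K F : Type*} [Field K] [Field F] [Algebra K F]
    (L : IntermediateField K F) : Subfield (RatFunc F) :=
  Subfield.closure ((fun a : F => RatFunc.C a) '' (L : Set F) ∪ {RatFunc.X})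

/-- The subfield `L(P)` of `F(P)` generated by an intermediate field `K ⊆ L ⊆ F` and
the classes `[x₁],…,[x_N]`. -/
def funcSubfield {K F : Type*} [Field K] [Field F] [Algebra K F] {N : ℕ}
    (P : Ideal (MvPolynomial (Fin N) F)) [P.IsPrime] (L : IntermediateField K F) :
    Subfield (funcField P) :=
  Subfield.closure ((embConst P) '' (L : Set F) ∪ Set.range (clsX P))

/-- An intermediate field `K ⊆ L ⊆ F` is a field of parametrization of the rational
curve defined by a prime ideal `P ⊆ F[x₁,…,x_N]` if there is a field isomorphism
`ψ : F(P) ≃ F(t)` restricting to the identity on `F`, with `ψ([xᵢ]) ∈ L(t)` for all `i`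
and `ψ⁻¹(t) ∈ L(P)`. -/
def IsFieldOfParametrization {K F : Type*} [Field K] [Field F] [Algebra K F] {N : ℕ}
    (P : Ideal (MvPolynomial (Fin N) F)) [P.IsPrime] (L : IntermediateField K F) : Prop :=
  ∃ ψ : funcField P ≃+* RatFunc F,
    (∀ c : F, ψ (embConst P c) = RatFunc.C c) ∧
    (∀ i : Fin N, ψ (clsX P i) ∈ ratSubfield L) ∧
    ψ.symm RatFunc.X ∈ funcSubfield P L

end

/-- `K(P) = Frac(K[x₁,…,x_N]/P^c)`, where `P^c = P ∩ K[x₁,…,x_N]`. -/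
abbrev contractedFuncField (K : Type*) [Field K] {F : Type*} [Field F] [Algebra K F]
    {N : ℕ} (P : Ideal (MvPolynomial (Fin N) F)) :=
  FractionRing (MvPolynomial (Fin N) K ⧸ Ideal.comap (coeffExt K F N) P)

/-- The canonical embedding of the constants `K` into `K(P)`. -/
noncomputable def embConstContracted (K : Type*) [Field K] {F : Type*} [Field F] [Algebra K F]
    {N : ℕ} (P : Ideal (MvPolynomial (Fin N) F)) : K →+* contractedFuncField K P :=
  (algebraMap (MvPolynomial (Fin N) K ⧸ Ideal.comap (coeffExt K F N) P)
      (contractedFuncField K P)).comp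
    ((Ideal.Quotient.mk (Ideal.comap (coeffExt K F N) P)).comp MvPolynomial.C)


/-! `F(P)` contains `K(P)` as the subfield generated over `K` by the `[xᵢ]`, and `F(t)` contains
`K(t)` as the subfield generated over `K` by `t`. The hypotheses say that `ψ` maps the generators
of each of these subfields into the other, so `ψ` restricts to an isomorphism `K(P) ≃ K(t)`.

Hence `P`, the kernel of `θ : F[x] → F(P) ≃ F(t)`, is cut out by a map that sends `K[x]` into
`K(t)`. Write `f ∈ P` as `∑ bᵢ fᵢ` with `(bᵢ)` a `K`-basis of `F` and `fᵢ ∈ K[x]`. As `F` and `K(t)`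
are linearly disjoint over `K` inside `F(t)` (clear denominators and compare coefficients),
`∑ bᵢ θ(fᵢ) = 0` forces `θ(fᵢ) = 0`, that is, `fᵢ ∈ P ∩ K[x]`. -/

theorem MvPolynomial.range_ringHom_eq_closure {R S σ : Type*} [CommRing R] [Ring S]
    (φ : MvPolynomial σ R →+* S) :
    φ.range = Subring.closure
      (Set.range (φ.comp MvPolynomial.C) ∪ Set.range (φ ∘ MvPolynomial.X)) := by
  have htop : (⊤ : Subring (MvPolynomial σ R)) =
      Subring.closure (Set.range MvPolynomial.C ∪ Set.range MvPolynomial.X) := by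
    rw [← MvPolynomial.algebraMap_eq, ← Algebra.adjoin_eq_ring_closure,
      MvPolynomial.adjoin_range_X]
    rfl
  rw [RingHom.range_eq_map, htop, RingHom.map_closure, Set.image_union, ← Set.range_comp,
    ← Set.range_comp, RingHom.coe_comp]

theorem Polynomial.range_ringHom_eq_closure {R S : Type*} [CommRing R] [Ring S]
    (φ : Polynomial R →+* S) :
    φ.range = Subring.closure (Set.range (φ.comp Polynomial.C) ∪ {φ Polynomial.X}) := by
  have htop : (⊤ : Subring (Polynomial R)) =
      Subring.closure (Set.range Polynomial.C ∪ {Polynomial.X}) := by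
    rw [← Polynomial.algebraMap_eq, ← Algebra.adjoin_eq_ring_closure, Polynomial.adjoin_X]
    rfl
  rw [RingHom.range_eq_map, htop, RingHom.map_closure, Set.image_union, ← Set.range_comp,
    Set.image_singleton, RingHom.coe_comp]

theorem RingHom.range_comp_of_surjective {R S T : Type*} [Ring R] [Ring S] [Ring T]
    {f : R →+* S} (hf : Function.Surjective f) (g : S →+* T) : (g.comp f).range = g.range := by
  rw [← RingHom.map_range, RingHom.range_eq_top_of_surjective f hf, RingHom.range_eq_map]

theorem RingHom.exists_ringEquiv_of_map_fieldRange_eq {E₁ E₂ L M : Type*} [Field E₁] [Field E₂]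
    [Field L] [Field M] (f : E₁ →+* L) (g : E₂ →+* M) (ψ : L ≃+* M)
    (h : f.fieldRange.map (ψ : L →+* M) = g.fieldRange) :
    ∃ φ : E₁ ≃+* E₂, ∀ x, g (φ x) = ψ (f x) := by
  rw [RingHom.map_fieldRange] at h
  refine ⟨((ψ : L →+* M).comp f).rangeRestrictFieldEquiv.trans
    ((RingEquiv.subfieldCongr h).trans g.rangeRestrictFieldEquiv.symm), fun x => ?_⟩
  rw [RingEquiv.trans_apply, RingEquiv.trans_apply, rangeRestrictFieldEquiv_apply_symm_apply]
  rfl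

section RatFunc

variable (K F : Type*) [Field K] [Field F] [Algebra K F]

noncomputable def coeffExtRatFunc : RatFunc K →+* RatFunc F :=
  IsFractionRing.lift (g := (algebraMap (Polynomial F) (RatFunc F)).comp
    (Polynomial.mapRingHom (algebraMap K F)))
    ((IsFractionRing.injective _ _).comp (Polynomial.map_injective _ (algebraMap K F).injective))

variable {K F}

theorem coeffExtRatFunc_algebraMap (p : Polynomial K) :
    coeffExtRatFunc K F (algebraMap _ _ p) = algebraMap _ _ (p.map (algebraMap K F)) :=
  IsFractionRing.lift_algebraMap _ _

theorem coeffExtRatFunc_C (k : K) :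
    coeffExtRatFunc K F (RatFunc.C k) = RatFunc.C (algebraMap K F k) := by
  rw [← RatFunc.algebraMap_C, coeffExtRatFunc_algebraMap, Polynomial.map_C, RatFunc.algebraMap_C]

theorem fieldRange_coeffExtRatFunc :
    (coeffExtRatFunc K F).fieldRange = ratSubfield (⊥ : IntermediateField K F) := by
  refine IsFractionRing.lift_fieldRange_eq_of_range_eq _ ?_
  rw [Polynomial.range_ringHom_eq_closure, IntermediateField.coe_bot, ← Set.range_comp]
  congr 3
  · ext k
    simp [RatFunc.algebraMap_C]
  · simp [RatFunc.algebraMap_X]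

variable {ι : Type*} {b : ι → F}

theorem Polynomial.eq_zero_of_sum_C_mul_map_eq_zero (hb : LinearIndependent K b)
    {s : Finset ι} {p : ι → Polynomial K}
    (h : ∑ i ∈ s, Polynomial.C (b i) * (p i).map (algebraMap K F) = 0) :
    ∀ i ∈ s, p i = 0 := by
  intro i hi
  ext n
  have hn := congr(Polynomial.coeff $h n)
  simp only [Polynomial.finsetSum_coeff, Polynomial.coeff_C_mul, Polynomial.coeff_map,
    Polynomial.coeff_zero, mul_comm (b _), ← Algebra.smul_def] at hn
  exact linearIndependent_iff'.mp hb s _ hn i hi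

theorem eq_zero_of_sum_C_mul_coeffExtRatFunc_eq_zero (hb : LinearIndependent K b)
    {s : Finset ι} {g : ι → RatFunc K}
    (h : ∑ i ∈ s, RatFunc.C (b i) * coeffExtRatFunc K F (g i) = 0) : ∀ i ∈ s, g i = 0 := by
  obtain ⟨q, hq⟩ := IsLocalization.exist_integer_multiples (nonZeroDivisors (Polynomial K)) s g
  choose! p hp using hq
  have hpoly : ∑ i ∈ s, Polynomial.C (b i) * (p i).map (algebraMap K F) = 0 := by
    apply RatFunc.algebraMap_injective F
    calc _ = coeffExtRatFunc K F (algebraMap _ _ (q : Polynomial K)) *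
          ∑ i ∈ s, RatFunc.C (b i) * coeffExtRatFunc K F (g i) := by
          simp only [map_sum, map_mul, Finset.mul_sum, RatFunc.algebraMap_C]
          refine Finset.sum_congr rfl fun i hi => ?_
          rw [← coeffExtRatFunc_algebraMap, hp i hi, Algebra.smul_def, map_mul]
          ring
      _ = _ := by rw [h, mul_zero, map_zero]
  intro i hi
  have hqg : (q : Polynomial K) • g i = 0 := by
    rw [← hp i hi, Polynomial.eq_zero_of_sum_C_mul_map_eq_zero hb hpoly i hi, map_zero]
  rwa [Algebra.smul_def, mul_eq_zero, or_iff_right] at hqg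
  exact RatFunc.algebraMap_ne_zero (nonZeroDivisors.coe_ne_zero q)

end RatFunc

theorem MvPolynomial.exists_sum_C_mul_map_of_basis {K F ι σ : Type*} [Field K] [Field F]
    [Algebra K F] (b : Module.Basis ι K F) (f : MvPolynomial σ F) :
    ∃ c : ι →₀ MvPolynomial σ K,
      f = c.sum fun i p => MvPolynomial.C (b i) * MvPolynomial.map (algebraMap K F) p := by
  obtain ⟨c, hc⟩ :=
    TensorProduct.eq_repr_basis_left b ((MvPolynomial.algebraTensorAlgEquiv K F).symm f)
  refine ⟨c, ?_⟩
  rw [← (MvPolynomial.algebraTensorAlgEquiv K F).apply_symm_apply f, ← hc, Finsupp.sum, map_sum]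
  simp only [MvPolynomial.algebraTensorAlgEquiv_tmul, MvPolynomial.smul_eq_C_mul]
  rfl

theorem isFieldOfDefinition_of_ker_eq {K F : Type*} [Field K] [Field F] [Algebra K F] {N : ℕ}
    {P : Ideal (MvPolynomial (Fin N) F)}
    (θ : MvPolynomial (Fin N) F →+* RatFunc F) (θK : MvPolynomial (Fin N) K →+* RatFunc K)
    (hker : RingHom.ker θ = P) (hC : ∀ a, θ (MvPolynomial.C a) = RatFunc.C a)
    (hcomm : ∀ g, θ (coeffExt K F N g) = coeffExtRatFunc K F (θK g)) :
    IsFieldOfDefinition K P := by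
  refine le_antisymm (fun f hf => ?_) Ideal.map_comap_le
  let b := Module.Basis.ofVectorSpace K F
  obtain ⟨c, rfl⟩ := MvPolynomial.exists_sum_C_mul_map_of_basis b f
  have hsum : ∑ i ∈ c.support, RatFunc.C (b i) * coeffExtRatFunc K F (θK (c i)) = 0 := by
    rw [← hker, RingHom.mem_ker, Finsupp.sum, map_sum] at hf
    simpa only [map_mul, hC, ← hcomm, coeffExt] using hf
  have hzero := eq_zero_of_sum_C_mul_coeffExtRatFunc_eq_zero b.linearIndependent hsum
  refine Ideal.sum_mem _ fun i hi => Ideal.mul_mem_left _ _ (Ideal.mem_map_of_mem _ ?_)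
  rw [Ideal.mem_comap, ← hker, RingHom.mem_ker, hcomm, hzero i hi, map_zero]

section FunctionField

variable (K : Type*) {F : Type*} [Field K] [Field F] [Algebra K F] {N : ℕ}
  (P : Ideal (MvPolynomial (Fin N) F)) [P.IsPrime]

noncomputable def coeffExtFuncField : contractedFuncField K P →+* funcField P :=
  IsFractionRing.lift (g := (algebraMap _ (funcField P)).comp
    (Ideal.quotientMap P (coeffExt K F N) le_rfl))
    ((IsFractionRing.injective _ _).comp Ideal.quotientMap_injective)

theorem coeffExtFuncField_algebraMap_mk (g : MvPolynomial (Fin N) K) :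
    coeffExtFuncField K P (algebraMap _ _ (Ideal.Quotient.mk (P.comap (coeffExt K F N)) g)) =
      algebraMap _ _ (Ideal.Quotient.mk P (coeffExt K F N g)) :=
  IsFractionRing.lift_algebraMap _ _

theorem coeffExtFuncField_embConstContracted (k : K) :
    coeffExtFuncField K P (embConstContracted K P k) = embConst P (algebraMap K F k) := by
  rw [embConstContracted, RingHom.comp_apply, RingHom.comp_apply,
    coeffExtFuncField_algebraMap_mk, coeffExt, MvPolynomial.map_C]
  rfl

theorem fieldRange_coeffExtFuncField :
    (coeffExtFuncField K P).fieldRange = funcSubfield P (⊥ : IntermediateField K F) := by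
  refine IsFractionRing.lift_fieldRange_eq_of_range_eq _ ?_
  rw [← RingHom.range_comp_of_surjective
      (Ideal.Quotient.mk_surjective (I := P.comap (coeffExt K F N))),
    MvPolynomial.range_ringHom_eq_closure, IntermediateField.coe_bot, ← Set.range_comp]
  congr 3
  · ext k
    change algebraMap _ (funcField P) (Ideal.Quotient.mk P (coeffExt K F N (MvPolynomial.C k))) = _
    rw [coeffExt, MvPolynomial.map_C]
    rfl
  · ext i
    change algebraMap _ (funcField P) (Ideal.Quotient.mk P (coeffExt K F N (MvPolynomial.X i))) = _
    rw [coeffExt, MvPolynomial.map_X]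
    rfl

end FunctionField

theorem map_funcSubfield_eq_ratSubfield {K F : Type*} [Field K] [Field F] [Algebra K F] {N : ℕ}
    {P : Ideal (MvPolynomial (Fin N) F)} [P.IsPrime] {L : IntermediateField K F}
    (ψ : funcField P ≃+* RatFunc F) (hC : ∀ c, ψ (embConst P c) = RatFunc.C c)
    (hX : ∀ i, ψ (clsX P i) ∈ ratSubfield L) (ht : ψ.symm RatFunc.X ∈ funcSubfield P L) :
    (funcSubfield P L).map (ψ : funcField P →+* RatFunc F) = ratSubfield L := by
  apply le_antisymm
  · rw [Subfield.map_le_iff_le_comap, funcSubfield, Subfield.closure_le]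
    rintro _ (⟨c, hc, rfl⟩ | ⟨i, rfl⟩)
    · exact Subfield.subset_closure (Or.inl ⟨c, hc, (hC c).symm⟩)
    · exact hX i
  · rw [ratSubfield, Subfield.closure_le]
    rintro _ (⟨c, hc, rfl⟩ | rfl)
    · exact ⟨embConst P c, Subfield.subset_closure (Or.inl ⟨c, hc, rfl⟩), hC c⟩
    · exact ⟨ψ.symm RatFunc.X, ht, ψ.apply_symm_apply _⟩

theorem fieldOfParametrization_implies_fieldOfDefinition_general
    {K F : Type*} [Field K] [Field F] [Algebra K F]
    {N : ℕ} (P : Ideal (MvPolynomial (Fin N) F)) [P.IsPrime]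
    (hpar : IsFieldOfParametrization P (⊥ : IntermediateField K F)) :
    (∃ φ : contractedFuncField K P ≃+* RatFunc K,
      ∀ c : K, φ (embConstContracted K P c) = RatFunc.C c) ∧
    IsFieldOfDefinition K P := by
  obtain ⟨ψ, hC, hX, ht⟩ := hpar
  obtain ⟨φ, hφ⟩ := RingHom.exists_ringEquiv_of_map_fieldRange_eq (coeffExtFuncField K P)
    (coeffExtRatFunc K F) ψ (by
      rw [fieldRange_coeffExtFuncField, map_funcSubfield_eq_ratSubfield ψ hC hX ht,
        fieldRange_coeffExtRatFunc])
  refine ⟨⟨φ, fun c => (coeffExtRatFunc K F).injective ?_⟩, ?_⟩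
  · rw [hφ, coeffExtFuncField_embConstContracted, hC, coeffExtRatFunc_C]
  refine isFieldOfDefinition_of_ker_eq
    ((ψ : funcField P →+* RatFunc F).comp ((algebraMap _ _).comp (Ideal.Quotient.mk P)))
    ((φ : contractedFuncField K P →+* RatFunc K).comp
      ((algebraMap _ _).comp (Ideal.Quotient.mk (P.comap (coeffExt K F N)))))
    ?_ hC fun g => ?_
  · rw [RingHom.ker_comp_of_injective _ ψ.injective,
      RingHom.ker_comp_of_injective _ (IsFractionRing.injective _ _), Ideal.mk_ker]
  · simp only [RingHom.comp_apply, RingEquiv.coe_toRingHom, hφ, coeffExtFuncField_algebraMap_mk]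

/-- **Proposition.** Let `K` be a field of characteristic zero with algebraic closure
`F` and let `P ⊆ F[x₁,…,x_N]` be a prime ideal. If `K` is a field of parametrization of
`P`, then `K(P)` is isomorphic to the rational function field `K(t)` by an isomorphism
that is the identity on `K`, and `K` is a field of definition of `P`. -/
theorem fieldOfParametrization_implies_fieldOfDefinition
    {K F : Type*} [Field K] [CharZero K] [Field F] [Algebra K F] [IsAlgClosure K F]
    {N : ℕ} (P : Ideal (MvPolynomial (Fin N) F)) [P.IsPrime]
    (hpar : IsFieldOfParametrization P (⊥ : IntermediateField K F)) :
    (∃ φ : contractedFuncField K P ≃+* RatFunc K,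
      ∀ c : K, φ (embConstContracted K P c) = RatFunc.C c) ∧
    IsFieldOfDefinition K P :=
  fieldOfParametrization_implies_fieldOfDefinition_general P hpar
end
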